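/- Let f be analytic on 𝔻 with f(0) = 0 and f'(0) = 1, and suppose there exists an analytic ω : 𝔻 → ℂ with ω(0) = 0 and |ω(z)| ≤ |z| on 𝔻 such that z·f'(z) = f(z)·exp(ω(z)) for all z ∈ 𝔻 (i.e. f ∈ S*_e, zf'/f subordinate to e^z). Then for every z with 0 < |z| < log(1 + arcsinh(1)) (Real.log, arcsinh(1) = Real.arsinh 1), one has f(z) ≠ 0 and z·f'(z)/f(z) ∈ Ω_ρ. -/

import Mathlib

/-!
Since `z f'(z) / f(z) = exp (ω z)` and `‖ω z‖ ≤ ‖z‖`, it suffices that `f` has no zero `z ≠ 0` in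
`𝔻` and that `exp ζ ∈ Ω_ρ` whenever `‖ζ‖ < log (1 + arsinh 1)`.

For the latter, `u = exp ζ - 1` satisfies `‖u‖ ≤ exp ‖ζ‖ - 1 < arsinh 1`, so `w = sinh u` lies in
`𝔻` (`‖sinh u‖ ≤ sinh ‖u‖ < 1`), and `ρ w = 1 + u`: as `Re (cosh u) > 0`, the principal square root
of `1 + sinh u ^ 2 = cosh u ^ 2` is `cosh u`, and `log (sinh u + cosh u) = log (exp u) = u`.

For the former, near a zero `z ≠ 0` the equation reads `f' = f · exp ω / z`, which forces the zero
to have infinite order; by the identity theorem `f` would vanish on `𝔻`, contradicting `f'(0) = 1`.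
-/

open Complex

/-- Principal branch of the complex inverse hyperbolic sine. -/
noncomputable def carcsinh (z : ℂ) : ℂ := Complex.log (z + (1 + z ^ 2) ^ ((1 : ℂ) / 2))

/-- The function `ρ(z) = 1 + arcsinh z`. -/
noncomputable def ρ (z : ℂ) : ℂ := 1 + carcsinh z

/-- The open unit disk in `ℂ`. -/
def unitDisk : Set ℂ := {z : ℂ | ‖z‖ < 1}

/-- The petal-shaped domain `Ω_ρ = ρ '' 𝔻`. -/
noncomputable def OmegaRho : Set ℂ := ρ '' unitDisk

open Topology Filter

namespace Complex

open scoped Nat in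
lemma norm_exp_sub_one_le_exp_norm_sub_one (z : ℂ) : ‖exp z - 1‖ ≤ Real.exp ‖z‖ - 1 := by
  have hc : HasSum (fun n : ℕ ↦ z ^ (n + 1) / (n + 1)!) (exp z - 1) := by
    have := (hasSum_nat_add_iff' 1).mpr (NormedSpace.expSeries_div_hasSum_exp z)
    simpa [← exp_eq_exp_ℂ] using this
  have hr : HasSum (fun n : ℕ ↦ ‖z‖ ^ (n + 1) / (n + 1)!) (Real.exp ‖z‖ - 1) := by
    have := (hasSum_nat_add_iff' 1).mpr (NormedSpace.expSeries_div_hasSum_exp ‖z‖)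
    simpa [← Real.exp_eq_exp_ℝ] using this
  exact hc.norm_le_of_bounded hr fun n ↦ by rw [norm_div, norm_pow, norm_natCast]

lemma norm_sinh_le_sinh_norm (z : ℂ) : ‖sinh z‖ ≤ Real.sinh ‖z‖ :=
  (hasSum_sinh z).norm_le_of_bounded (Real.hasSum_sinh ‖z‖) fun n ↦ by
    rw [norm_div, norm_pow, norm_natCast]

lemma cosh_re (z : ℂ) : (cosh z).re = Real.cosh z.re * Real.cos z.im := by
  simp only [cosh, div_ofNat_re, add_re, exp_re, neg_re, neg_im, Real.cos_neg, Real.cosh_eq]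
  ring

end Complex

lemma carcsinh_sinh {u : ℂ} (hu : |u.im| < Real.pi / 2) : carcsinh (sinh u) = u := by
  have hcosh : 0 < (cosh u).re := by
    rw [cosh_re]
    exact mul_pos (Real.cosh_pos _) (Real.cos_pos_of_mem_Ioo (abs_lt.mp hu))
  have hroot : (1 + sinh u ^ 2) ^ ((1 : ℂ) / 2) = cosh u := by
    rw [one_div, show 1 + sinh u ^ 2 = cosh u ^ 2 by linear_combination -cosh_sq_sub_sinh_sq u,
      sq_cpow_two_inv hcosh]
  rw [carcsinh, hroot, sinh_add_cosh]
  obtain ⟨hlo, hhi⟩ := abs_lt.mp hu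
  exact log_exp (by linarith [Real.pi_pos]) (by linarith [Real.pi_pos])

lemma arsinh_one_lt_one : Real.arsinh 1 < 1 := by
  rw [← Real.sinh_lt_sinh, Real.sinh_arsinh]
  exact Real.self_lt_sinh_iff.mpr one_pos

lemma one_add_mem_OmegaRho {u : ℂ} (hu : ‖u‖ < Real.arsinh 1) : 1 + u ∈ OmegaRho := by
  refine ⟨sinh u, ?_, ?_⟩
  · calc ‖sinh u‖ ≤ Real.sinh ‖u‖ := norm_sinh_le_sinh_norm u
      _ < Real.sinh (Real.arsinh 1) := Real.sinh_lt_sinh.mpr hu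
      _ = 1 := Real.sinh_arsinh 1
  · have him : |u.im| < Real.pi / 2 := by
      linarith [abs_im_le_norm u, arsinh_one_lt_one, Real.pi_gt_three]
    rw [ρ, carcsinh_sinh him]

lemma exp_mem_OmegaRho {ζ : ℂ} (hζ : ‖ζ‖ < Real.log (1 + Real.arsinh 1)) :
    exp ζ ∈ OmegaRho := by
  have hpos : 0 < 1 + Real.arsinh 1 := by linarith [Real.arsinh_nonneg_iff.mpr zero_le_one]
  have hu : ‖exp ζ - 1‖ < Real.arsinh 1 := by
    calc ‖exp ζ - 1‖ ≤ Real.exp ‖ζ‖ - 1 := norm_exp_sub_one_le_exp_norm_sub_one ζ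
      _ < Real.exp (Real.log (1 + Real.arsinh 1)) - 1 := by gcongr
      _ = Real.arsinh 1 := by rw [Real.exp_log hpos]; ring
  simpa using one_add_mem_OmegaRho hu

section OrderOfZero

variable {𝕜 : Type*} [NontriviallyNormedField 𝕜] [CharZero 𝕜] [CompleteSpace 𝕜]

-- At a zero of finite order `n ≥ 1`, `f'` vanishes to order `n - 1` but `f * a` to order `≥ n`.
lemma AnalyticAt.analyticOrderAt_eq_top_of_deriv_eventuallyEq_mul {f a : 𝕜 → 𝕜} {z : 𝕜}
    (hf : AnalyticAt 𝕜 f z) (ha : AnalyticAt 𝕜 a z) (hfa : deriv f =ᶠ[𝓝 z] f * a)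
    (hfz : f z = 0) : analyticOrderAt f z = ⊤ := by
  by_contra hfin
  obtain ⟨n, hn⟩ := WithTop.ne_top_iff_exists.mp hfin
  cases n with
  | zero => exact (analyticOrderAt_eq_zero.mp hn.symm).resolve_left (not_not.mpr hf) hfz
  | succ m =>
    have hderiv : analyticOrderAt (deriv f) z = m :=
      analyticOrderAt_deriv_of_pos hf (by rw [← hn]; push_cast; rfl)
    have hord := analyticOrderAt_congr hfa
    rw [analyticOrderAt_mul hf ha, hderiv, ← hn] at hord
    have hle : ((m + 1 : ℕ) : ℕ∞) ≤ m := hord ▸ le_self_add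
    norm_cast at hle
    omega

lemma ne_zero_of_mul_deriv_eq_mul {U : Set 𝕜} {f h : 𝕜 → 𝕜} (hU : IsOpen U) (hUc : IsConnected U)
    (h0 : 0 ∈ U) (hf : AnalyticOnNhd 𝕜 f U) (hf' : deriv f 0 ≠ 0) (hh : AnalyticOnNhd 𝕜 h U)
    (hfh : ∀ z ∈ U, z * deriv f z = f z * h z) {z : 𝕜} (hz : z ∈ U) (hz0 : z ≠ 0) :
    f z ≠ 0 := by
  intro hfz
  have hfin0 : analyticOrderAt f 0 ≠ ⊤ := by
    intro htop
    have hf0 : f =ᶠ[𝓝 0] 0 := analyticOrderAt_eq_top.mp htop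
    exact hf' (hf0.deriv_eq.trans (by simp))
  have hfin : analyticOrderAt f z ≠ ⊤ :=
    (hf.exists_analyticOrderAt_ne_top_iff_forall hUc).mp ⟨⟨0, h0⟩, hfin0⟩ ⟨z, hz⟩
  refine hfin ((hf z hz).analyticOrderAt_eq_top_of_deriv_eventuallyEq_mul (a := fun w ↦ h w / w)
    ((hh z hz).div analyticAt_id hz0) ?_ hfz)
  filter_upwards [hU.mem_nhds hz, eventually_ne_nhds hz0] with w hw hw0
  rw [Pi.mul_apply, mul_div_assoc', eq_div_iff hw0, mul_comm, hfh w hw]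

end OrderOfZero

lemma unitDisk_eq_ball : unitDisk = Metric.ball (0 : ℂ) 1 := by
  ext w; simp [unitDisk]

theorem radius_Se_general (f : ℂ → ℂ) (hf : AnalyticOnNhd ℂ f unitDisk)
    (hf1 : deriv f 0 = 1)
    (ω : ℂ → ℂ) (hω : AnalyticOnNhd ℂ ω unitDisk)
    (hωb : ∀ z ∈ unitDisk, ‖ω z‖ ≤ ‖z‖)
    (hsub : ∀ z ∈ unitDisk, z * deriv f z = f z * Complex.exp (ω z)) :
    ∀ z : ℂ, 0 < ‖z‖ →
      ‖z‖ < Real.log (1 + Real.arsinh 1) →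
      f z ≠ 0 ∧ z * deriv f z / f z ∈ OmegaRho := by
  intro z hz0 hzR
  have hz : z ∈ unitDisk := by
    have hpos : 0 < 1 + Real.arsinh 1 := by linarith [Real.arsinh_nonneg_iff.mpr zero_le_one]
    calc ‖z‖ < Real.log (1 + Real.arsinh 1) := hzR
      _ ≤ Real.arsinh 1 := by linarith [Real.log_le_sub_one_of_pos hpos]
      _ < 1 := arsinh_one_lt_one
  have hfz : f z ≠ 0 := by
    rw [unitDisk_eq_ball] at hf hω hsub hz
    exact ne_zero_of_mul_deriv_eq_mul Metric.isOpen_ball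
      ((convex_ball 0 1).isConnected (Metric.nonempty_ball.mpr one_pos))
      (Metric.mem_ball_self one_pos) hf (hf1 ▸ one_ne_zero) (fun w hw ↦ (hω w hw).cexp) hsub hz
      (norm_pos_iff.mp hz0)
  refine ⟨hfz, ?_⟩
  rw [hsub z hz, mul_div_cancel_left₀ _ hfz]
  exact exp_mem_OmegaRho ((hωb z hz).trans_lt hzR)

/-- `S*_ρ`-radius for the class `S*_e` (where `z f'(z)/f(z)` is subordinate to `e^z`):
for `0 < |z| < log (1 + arcsinh 1)`, one has `f z ≠ 0` and `z f'(z)/f(z) ∈ Ω_ρ`. -/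
theorem radius_Se (f : ℂ → ℂ) (hf : AnalyticOnNhd ℂ f unitDisk)
    (hf0 : f 0 = 0) (hf1 : deriv f 0 = 1)
    (ω : ℂ → ℂ) (hω : AnalyticOnNhd ℂ ω unitDisk) (hω0 : ω 0 = 0)
    (hωb : ∀ z ∈ unitDisk, ‖ω z‖ ≤ ‖z‖)
    (hsub : ∀ z ∈ unitDisk, z * deriv f z = f z * Complex.exp (ω z)) :
    ∀ z : ℂ, 0 < ‖z‖ →
      ‖z‖ < Real.log (1 + Real.arsinh 1) →
      f z ≠ 0 ∧ z * deriv f z / f z ∈ OmegaRho :=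
  radius_Se_general f hf hf1 ω hω hωb hsub
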